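/- The periodic unfolding operator preserves integrals and L^r norms: for u ∈ L^r(Ω) (extended by zero outside Ω) and T^ε u(x,y) := u(ε⌊x/ε⌋ + εy), one has ∫_Ω u(x) dx = (1/|Y|)∫_{Ω×Y} T^ε u(x,y) dxdy and ‖u‖_{L^r(Ω)} = |Y|^{-1/r}‖T^ε u‖_{L^r(Ω×Y)} for 1 ≤ r < ∞. Moreover T^ε is linear and ∇_y(T^ε u) = ε T^ε(∇_x u) when u ∈ W^{1,r}. -/

import Mathlib

open Set Real MeasureTheory

noncomputable section

/-- The unit periodicity cell `Y = (0,1)^d`. -/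
def unitCell (d : ℕ) : Set (EuclideanSpace ℝ (Fin d)) :=
  {y | ∀ i, y i ∈ Ioo (0 : ℝ) 1}

/-- `ε⌊x/ε⌋`, the corner of the `ε`-cell containing `x`. -/
def cellCorner {d : ℕ} (ε : ℝ) (x : EuclideanSpace ℝ (Fin d)) :
    EuclideanSpace ℝ (Fin d) :=
  (WithLp.equiv 2 (Fin d → ℝ)).symm fun i => ε * ⌊x i / ε⌋

/-- The periodic unfolding operator `T^ε u (x,y) = u(ε⌊x/ε⌋ + εy)`. -/
def unfold {d : ℕ} (ε : ℝ) (u : EuclideanSpace ℝ (Fin d) → ℝ)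
    (x y : EuclideanSpace ℝ (Fin d)) : ℝ :=
  u (cellCorner ε x + ε • y)

/-! The map `(x, y) ↦ ε⌊x/ε⌋ + εy` carries `volume ⊗ volume|_Y` to `volume`: on the half-open
cell `ε(k + [0,1)^d)` the first term is the constant `εk`, and `y ↦ εk + εy` maps `Y` onto the
open cell with Jacobian `ε^d`, which the volume `ε^d` of the cell cancels; the open cells miss
only a null union of hyperplanes. As `|Y| = 1`, both integral identities are Fubini for this
measure-preserving map, and the gradient identity is the chain rule for `y ↦ εy`. -/

namespace Unfolding

variable {ι : Type*} {ε : ℝ}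

theorem setOf_forall_apply_mem (S : ι → Set ℝ) :
    {x : EuclideanSpace ℝ ι | ∀ i, x i ∈ S i} = WithLp.ofLp ⁻¹' univ.pi S := by
  ext; simp

theorem measurableSet_setOf_forall_apply_mem [Finite ι] {S : ι → Set ℝ}
    (hS : ∀ i, MeasurableSet (S i)) :
    MeasurableSet {x : EuclideanSpace ℝ ι | ∀ i, x i ∈ S i} :=
  setOf_forall_apply_mem S ▸ (MeasurableSet.univ_pi hS).preimage (WithLp.measurable_ofLp 2 _)

theorem volume_setOf_forall_apply_mem [Fintype ι] (S : ι → Set ℝ) :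
    volume {x : EuclideanSpace ℝ ι | ∀ i, x i ∈ S i} = ∏ i, volume (S i) := by
  rw [setOf_forall_apply_mem]
  exact ((EuclideanSpace.volume_preserving_symm_measurableEquiv_toLp ι).measure_preimage_equiv
    (univ.pi S)).trans (volume_pi_pi S)

theorem volume_setOf_apply_eq [Fintype ι] (i : ι) (c : ℝ) :
    volume {x : EuclideanSpace ℝ ι | x i = c} = 0 :=
  (EuclideanSpace.volume_preserving_symm_measurableEquiv_toLp ι).measure_preimage_equiv
    {f | f i = c} |>.trans (Measure.pi_hyperplane (fun _ : ι => (volume : Measure ℝ)) i c)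

theorem volume_unitCell (d : ℕ) : volume (unitCell d) = 1 := by
  rw [unitCell, volume_setOf_forall_apply_mem]
  simp

def cell (ε : ℝ) (k : ι → ℤ) : Set (EuclideanSpace ℝ ι) :=
  {x | ∀ i, x i ∈ Ico (ε * k i) (ε * k i + ε)}

def openCell (ε : ℝ) (k : ι → ℤ) : Set (EuclideanSpace ℝ ι) :=
  {x | ∀ i, x i ∈ Ioo (ε * k i) (ε * k i + ε)}

theorem measurableSet_cell [Finite ι] (k : ι → ℤ) : MeasurableSet (cell ε k) :=
  measurableSet_setOf_forall_apply_mem fun _ => measurableSet_Ico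

theorem measurableSet_openCell [Finite ι] (k : ι → ℤ) : MeasurableSet (openCell ε k) :=
  measurableSet_setOf_forall_apply_mem fun _ => measurableSet_Ioo

theorem volume_cell [Fintype ι] (hε : 0 < ε) (k : ι → ℤ) :
    volume (cell ε k) = ENNReal.ofReal (ε ^ Fintype.card ι) := by
  rw [cell, volume_setOf_forall_apply_mem]
  simp [ENNReal.ofReal_pow hε.le]

theorem mem_cell_iff (hε : 0 < ε) {x : EuclideanSpace ℝ ι} {k : ι → ℤ} :
    x ∈ cell ε k ↔ ∀ i, ⌊x i / ε⌋ = k i := by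
  refine forall_congr' fun i => ?_
  rw [Int.floor_eq_iff, le_div_iff₀ hε, div_lt_iff₀ hε, mem_Ico, add_mul, one_mul, mul_comm]

theorem iUnion_cell (hε : 0 < ε) : ⋃ k : ι → ℤ, cell ε k = univ :=
  eq_univ_of_forall fun x => mem_iUnion.2 ⟨fun i => ⌊x i / ε⌋, (mem_cell_iff hε).2 fun _ => rfl⟩

theorem pairwise_disjoint_cell (hε : 0 < ε) :
    Pairwise (Function.onFun Disjoint (cell ε : (ι → ℤ) → Set (EuclideanSpace ℝ ι))) :=
  fun _ _ hkl => Set.disjoint_left.2 fun _ hk hl => hkl <| funext fun i =>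
    ((mem_cell_iff hε).1 hk i).symm.trans ((mem_cell_iff hε).1 hl i)

theorem openCell_subset_cell (k : ι → ℤ) : openCell ε k ⊆ cell ε k :=
  fun _ hx i => Ioo_subset_Ico_self (hx i)

theorem pairwise_disjoint_openCell (hε : 0 < ε) :
    Pairwise (Function.onFun Disjoint (openCell ε : (ι → ℤ) → Set (EuclideanSpace ℝ ι))) :=
  fun _ _ hkl =>
    (pairwise_disjoint_cell hε hkl).mono (openCell_subset_cell _) (openCell_subset_cell _)

theorem cell_diff_openCell_subset (k : ι → ℤ) :
    cell ε k \ openCell ε k ⊆ ⋃ i, {x : EuclideanSpace ℝ ι | x i = ε * k i} := by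
  rintro x ⟨hcell, hopen⟩
  obtain ⟨i, hi⟩ := not_forall.1 hopen
  exact mem_iUnion.2 ⟨i, ((hcell i).1.eq_or_lt.resolve_right fun h => hi ⟨h, (hcell i).2⟩).symm⟩

theorem volume_compl_iUnion_openCell [Fintype ι] (hε : 0 < ε) :
    volume (⋃ k : ι → ℤ, openCell ε k)ᶜ = 0 := by
  refine measure_mono_null (t := ⋃ (k : ι → ℤ) (i : ι), {x | x i = ε * k i}) ?_ <|
    measure_iUnion_null fun k => measure_iUnion_null fun i => volume_setOf_apply_eq i _
  intro x hx
  obtain ⟨k, hk⟩ := mem_iUnion.1 ((iUnion_cell hε).symm ▸ mem_univ x : x ∈ ⋃ k, cell ε k)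
  exact mem_iUnion.2 ⟨k, cell_diff_openCell_subset k ⟨hk, fun h => hx (mem_iUnion.2 ⟨k, h⟩)⟩⟩

theorem addHaar_preimage_add_smul {E : Type*} [NormedAddCommGroup E] [NormedSpace ℝ E]
    [MeasurableSpace E] [BorelSpace E] [FiniteDimensional ℝ E] (μ : Measure E)
    [μ.IsAddHaarMeasure] (hε : 0 < ε) (c : E) (s : Set E) :
    μ ((fun y => c + ε • y) ⁻¹' s) = ENNReal.ofReal (ε ^ Module.finrank ℝ E)⁻¹ * μ s := by
  rw [show (fun y => c + ε • y) ⁻¹' s = (ε • ·) ⁻¹' ((c + ·) ⁻¹' s) from rfl,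
    Measure.addHaar_preimage_smul μ hε.ne', measure_preimage_add, abs_of_pos (by positivity)]

variable {d : ℕ}

theorem cellCorner_eq_of_mem_cell (hε : 0 < ε) {x : EuclideanSpace ℝ (Fin d)} {k : Fin d → ℤ}
    (hx : x ∈ cell ε k) : cellCorner ε x = WithLp.toLp 2 fun i => ε * k i := by
  ext i
  simp [cellCorner, (mem_cell_iff hε).1 hx i]

theorem preimage_openCell (hε : 0 < ε) (k : Fin d → ℤ) :
    (fun y => WithLp.toLp 2 (fun i => ε * k i) + ε • y) ⁻¹' openCell ε k = unitCell d := by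
  ext y
  refine forall_congr' fun i => ?_
  simp [mul_pos_iff_of_pos_left hε, mul_lt_iff_lt_one_right hε]

theorem measurable_cellCorner : Measurable (cellCorner (d := d) ε) := by
  refine (WithLp.measurable_toLp 2 _).comp (measurable_pi_lambda _ fun i => ?_)
  have hcoord : Measurable fun x : EuclideanSpace ℝ (Fin d) => x i := by fun_prop
  exact (measurable_from_top (f := fun n : ℤ => ε * (n : ℝ))).comp (hcoord.div_const ε).floor

theorem volume_restrict_unitCell_preimage (hε : 0 < ε) {x : EuclideanSpace ℝ (Fin d)}
    {k : Fin d → ℤ} (hx : x ∈ cell ε k) {A : Set (EuclideanSpace ℝ (Fin d))}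
    (hA : MeasurableSet A) :
    volume.restrict (unitCell d) ((fun y => cellCorner ε x + ε • y) ⁻¹' A) =
      ENNReal.ofReal (ε ^ d)⁻¹ * volume (A ∩ openCell ε k) := by
  have hmeas : Measurable fun y : EuclideanSpace ℝ (Fin d) => cellCorner ε x + ε • y := by
    fun_prop
  rw [Measure.restrict_apply (hmeas hA), cellCorner_eq_of_mem_cell hε hx,
    ← preimage_openCell hε k, ← preimage_inter, addHaar_preimage_add_smul volume hε,
    finrank_euclideanSpace_fin]

theorem measurePreserving_cellCorner_add_smul (hε : 0 < ε) :
    MeasurePreserving (fun p : EuclideanSpace ℝ (Fin d) × EuclideanSpace ℝ (Fin d) =>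
      cellCorner ε p.1 + ε • p.2) (volume.prod (volume.restrict (unitCell d))) volume := by
  have hmeas : Measurable fun p : EuclideanSpace ℝ (Fin d) × EuclideanSpace ℝ (Fin d) =>
      cellCorner ε p.1 + ε • p.2 :=
    (measurable_cellCorner.comp measurable_fst).add (measurable_snd.const_smul ε)
  refine ⟨hmeas, Measure.ext fun A hA => ?_⟩
  have hcell (k : Fin d → ℤ) : ∫⁻ x in cell ε k,
      volume.restrict (unitCell d) ((fun y => cellCorner ε x + ε • y) ⁻¹' A) =
        volume (A ∩ openCell ε k) := by
    rw [setLIntegral_congr_fun (measurableSet_cell k)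
        fun x hx => volume_restrict_unitCell_preimage hε hx hA,
      setLIntegral_const, volume_cell hε, Fintype.card_fin, mul_comm, ← mul_assoc,
      ← ENNReal.ofReal_mul (by positivity), mul_inv_cancel₀ (by positivity),
      ENNReal.ofReal_one, one_mul]
  calc Measure.map _ (volume.prod (volume.restrict (unitCell d))) A
      = ∑' k, ∫⁻ x in cell ε k,
          volume.restrict (unitCell d) ((fun y => cellCorner ε x + ε • y) ⁻¹' A) := by
        rw [Measure.map_apply hmeas hA, Measure.prod_apply (hmeas hA), ← setLIntegral_univ,
          ← iUnion_cell hε, lintegral_iUnion measurableSet_cell (pairwise_disjoint_cell hε)]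
        rfl
    _ = volume (A ∩ ⋃ k, openCell ε k) := by
        rw [tsum_congr hcell, inter_iUnion, measure_iUnion
          (fun _ _ hkl => ((pairwise_disjoint_openCell hε hkl).mono inter_subset_right
            inter_subset_right)) fun k => hA.inter (measurableSet_openCell k)]
    _ = volume A := measure_inter_conull (volume_compl_iUnion_openCell hε)

theorem integral_eq_integral_unitCell (hε : 0 < ε) {f : EuclideanSpace ℝ (Fin d) → ℝ}
    (hf : Integrable f) :
    ∫ x, f x = ∫ x, ∫ y in unitCell d, f (cellCorner ε x + ε • y) := by
  have hψ := measurePreserving_cellCorner_add_smul (d := d) hε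
  calc ∫ x, f x = ∫ z, f z ∂(Measure.map _ (volume.prod (volume.restrict (unitCell d)))) := by
        rw [hψ.map_eq]
    _ = ∫ p, f (cellCorner ε p.1 + ε • p.2) ∂(volume.prod (volume.restrict (unitCell d))) :=
        integral_map hψ.measurable.aemeasurable (by rw [hψ.map_eq]; exact hf.aestronglyMeasurable)
    _ = _ := integral_prod _ (hψ.integrable_comp hf.aestronglyMeasurable |>.2 hf)

theorem fderiv_unfold (u : EuclideanSpace ℝ (Fin d) → ℝ) (x y : EuclideanSpace ℝ (Fin d)) :
    fderiv ℝ (unfold ε u x) y = ε • fderiv ℝ u (cellCorner ε x + ε • y) := by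
  rw [show unfold ε u x = fun y => u (cellCorner ε x + ε • y) from rfl,
    fderiv_comp_smul (f := fun z => u (cellCorner ε x + z)), fderiv_comp_add_left]

end Unfolding

open Unfolding

theorem unfolding_operator_properties_general (d : ℕ) (ε : ℝ) (hε : 0 < ε)
    (r : ℝ)
    (u : EuclideanSpace ℝ (Fin d) → ℝ)
    (huint : Integrable u volume)
    (hurint : Integrable (fun x => |u x| ^ r) volume) :
    (∫ x, u x = (1 / (volume (unitCell d)).toReal) *
        ∫ x, ∫ y in unitCell d, unfold ε u x y) ∧
    ((∫ x, |u x| ^ r) ^ (1 / r) =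
      ((volume (unitCell d)).toReal) ^ (-(1 / r)) *
        (∫ x, ∫ y in unitCell d, |unfold ε u x y| ^ r) ^ (1 / r)) ∧
    (∀ (a : ℝ) (v : EuclideanSpace ℝ (Fin d) → ℝ) (x y),
      unfold ε (a • u + v) x y = a * unfold ε u x y + unfold ε v x y) ∧
    (Differentiable ℝ u → ∀ x y,
      fderiv ℝ (fun y' => unfold ε u x y') y =
        ε • fderiv ℝ u (cellCorner ε x + ε • y)) := by
  simp only [volume_unitCell, ENNReal.toReal_one, div_one, one_mul, one_rpow]
  refine ⟨integral_eq_integral_unitCell hε huint,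
    congrArg (· ^ (1 / r)) (integral_eq_integral_unitCell hε hurint),
    fun _ _ _ _ => rfl, fun _ x y => fderiv_unfold u x y⟩

/-- The unfolding operator is linear, preserves integrals and `L^r` norms,
and intertwines fast gradients: `∇_y (T^ε u) = ε T^ε(∇ u)`. -/
theorem unfolding_operator_properties (d : ℕ) (ε : ℝ) (hε : 0 < ε)
    (Ω : Set (EuclideanSpace ℝ (Fin d))) (hΩ : IsOpen Ω)
    (hΩbdd : Bornology.IsBounded Ω)
    (r : ℝ) (hr : 1 ≤ r)
    (u : EuclideanSpace ℝ (Fin d) → ℝ)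
    (hu0 : ∀ x ∉ Ω, u x = 0)  -- `u` is extended by zero outside `Ω`
    (humeas : Measurable u)
    (huint : Integrable u volume)
    (hurint : Integrable (fun x => |u x| ^ r) volume) :
    (∫ x, u x = (1 / (volume (unitCell d)).toReal) *
        ∫ x, ∫ y in unitCell d, unfold ε u x y) ∧
    ((∫ x, |u x| ^ r) ^ (1 / r) =
      ((volume (unitCell d)).toReal) ^ (-(1 / r)) *
        (∫ x, ∫ y in unitCell d, |unfold ε u x y| ^ r) ^ (1 / r)) ∧
    (∀ (a : ℝ) (v : EuclideanSpace ℝ (Fin d) → ℝ) (x y),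
      unfold ε (a • u + v) x y = a * unfold ε u x y + unfold ε v x y) ∧
    (Differentiable ℝ u → ∀ x y,
      fderiv ℝ (fun y' => unfold ε u x y') y =
        ε • fderiv ℝ u (cellCorner ε x + ε • y)) :=
  unfolding_operator_properties_general d ε hε r u huint hurint

end
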